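/- arXiv:1602.01727 — 6 statements merged into one kernel-verified Lean document; each statement's English description precedes it below -/
import Mathlib

section
/- A nonzero symmetric real d×d matrix B fails to have two nonzero eigenvalues sharing the same sign if and only if B can be written as vvᵀ − wwᵀ for some v, w ∈ ℝ^d with v ≠ ±w. -/
/-!
If `B = v vᵀ - w wᵀ`, the quadratic form `x ↦ xᵀ B x = (v ⬝ x)² - (w ⬝ x)²` is nonpositive on the
hyperplane `v⊥`, while it is positive away from `0` on the plane spanned by two orthonormal
eigenvectors with positive eigenvalues, and that plane meets `v⊥`; so `B` cannot have two positive
eigenvalues, and likewise `-B = w wᵀ - v vᵀ` cannot. Conversely, splitting the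
spectral decomposition `B = ∑ λᵢ uᵢ uᵢᵀ` into its positive and negative parts writes `B` as
`v vᵀ - w wᵀ` when each part has at most one term, and `v = ± w` would force `B = 0`.
-/

open Matrix

namespace Matrix

variable {n : Type*}

lemma vecMulVec_neg_neg {α : Type*} [Mul α] [HasDistribNeg α] (w : n → α) :
    vecMulVec (-w) (-w) = vecMulVec w w := by
  rw [neg_vecMulVec, vecMulVec_neg, neg_neg]

lemma exists_sum_smul_vecMulVec_self_eq {ι : Type*} [Fintype ι] (c : ι → ℝ) (hc : ∀ i, 0 ≤ c i)
    (hsupp : {i | 0 < c i}.Subsingleton) (u : ι → n → ℝ) :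
    ∃ v : n → ℝ, ∑ i, c i • vecMulVec (u i) (u i) = vecMulVec v v := by
  by_cases hpos : ∃ p, 0 < c p
  · obtain ⟨p, hp⟩ := hpos
    have hzero : ∀ i, i ≠ p → c i = 0 := fun i hip =>
      (hc i).eq_or_lt.elim Eq.symm fun hi => absurd (hsupp hi hp) hip
    refine ⟨√(c p) • u p, ?_⟩
    rw [Finset.sum_eq_single p (fun i _ hip => by rw [hzero i hip, zero_smul]) (by simp),
      smul_vecMulVec, vecMulVec_smul, smul_smul, Real.mul_self_sqrt (hc p)]
  · push Not at hpos
    refine ⟨0, ?_⟩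
    simp [fun i => le_antisymm (hpos i) (hc i)]

variable [Fintype n]

lemma dotProduct_mulVec_vecMulVec_sub_nonpos {v w x : n → ℝ} (hx : v ⬝ᵥ x = 0) :
    x ⬝ᵥ (vecMulVec v v - vecMulVec w w) *ᵥ x ≤ 0 := by
  rw [sub_mulVec, vecMulVec_mulVec, vecMulVec_mulVec, dotProduct_sub]
  simp only [MulOpposite.smul_eq_mul_unop, dotProduct_smul, MulOpposite.unop_op]
  rw [dotProduct_comm x v, dotProduct_comm x w, hx]
  nlinarith [sq_nonneg (w ⬝ᵥ x)]

lemma exists_dotProduct_add_eq_zero (v x y : n → ℝ) :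
    ∃ a b : ℝ, (a ≠ 0 ∨ b ≠ 0) ∧ v ⬝ᵥ (a • x + b • y) = 0 := by
  by_cases hx : v ⬝ᵥ x = 0
  · exact ⟨1, 0, by simp, by simp [hx]⟩
  · refine ⟨v ⬝ᵥ y, -(v ⬝ᵥ x), Or.inr (neg_ne_zero.mpr hx), ?_⟩
    simp only [dotProduct_add, dotProduct_smul, smul_eq_mul]
    ring

lemma dotProduct_mulVec_pos_of_eigenvectors {B : Matrix n n ℝ} {x y : n → ℝ} {μ ν : ℝ}
    (hBx : B *ᵥ x = μ • x) (hBy : B *ᵥ y = ν • y)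
    (hxx : x ⬝ᵥ x = 1) (hyy : y ⬝ᵥ y = 1) (hxy : x ⬝ᵥ y = 0) (hμ : 0 < μ) (hν : 0 < ν)
    {a b : ℝ} (hab : a ≠ 0 ∨ b ≠ 0) :
    0 < (a • x + b • y) ⬝ᵥ B *ᵥ (a • x + b • y) := by
  have hyx : y ⬝ᵥ x = 0 := by rw [dotProduct_comm, hxy]
  have hq : (a • x + b • y) ⬝ᵥ B *ᵥ (a • x + b • y) = a ^ 2 * μ + b ^ 2 * ν := by
    simp only [mulVec_add, mulVec_smul, hBx, hBy, add_dotProduct, dotProduct_add,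
      smul_dotProduct, dotProduct_smul, hxx, hyy, hxy, hyx, smul_eq_mul]
    ring
  rw [hq]
  rcases hab with ha | hb <;> positivity

lemma not_pos_eigenvectors_of_eq_vecMulVec_sub {B : Matrix n n ℝ} {v w : n → ℝ}
    (hB : B = vecMulVec v v - vecMulVec w w) {x y : n → ℝ} {μ ν : ℝ}
    (hBx : B *ᵥ x = μ • x) (hBy : B *ᵥ y = ν • y)
    (hxx : x ⬝ᵥ x = 1) (hyy : y ⬝ᵥ y = 1) (hxy : x ⬝ᵥ y = 0) (hμ : 0 < μ) (hν : 0 < ν) :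
    False := by
  obtain ⟨a, b, hab, hv⟩ := exists_dotProduct_add_eq_zero v x y
  have hpos := dotProduct_mulVec_pos_of_eigenvectors hBx hBy hxx hyy hxy hμ hν hab
  have hnonpos := dotProduct_mulVec_vecMulVec_sub_nonpos (w := w) hv
  rw [← hB] at hnonpos
  exact hpos.not_ge hnonpos

variable [DecidableEq n]

namespace IsHermitian

variable {B : Matrix n n ℝ} (hB : B.IsHermitian)
include hB

lemma eq_sum_smul_vecMulVec_eigenvectorBasis :
    B = ∑ i, hB.eigenvalues i • vecMulVec ⇑(hB.eigenvectorBasis i) ⇑(hB.eigenvectorBasis i) := by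
  conv_lhs => rw [hB.spectral_theorem]
  ext k l
  rw [Unitary.conjStarAlgAut_apply, mul_apply]
  simp only [mul_diagonal, star_apply, Function.comp_apply, RCLike.ofReal_real_eq_id, id,
    eigenvectorUnitary_apply, star_trivial, Matrix.sum_apply, smul_apply, vecMulVec_apply,
    smul_eq_mul]
  exact Finset.sum_congr rfl fun i _ => by ring

lemma dotProduct_eigenvectorBasis_self (i : n) :
    ⇑(hB.eigenvectorBasis i) ⬝ᵥ ⇑(hB.eigenvectorBasis i) = 1 := by
  have h := orthonormal_iff_ite.mp hB.eigenvectorBasis.orthonormal i i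
  rwa [if_pos rfl, EuclideanSpace.inner_eq_star_dotProduct, star_trivial] at h

lemma dotProduct_eigenvectorBasis_of_ne {i j : n} (hij : i ≠ j) :
    ⇑(hB.eigenvectorBasis i) ⬝ᵥ ⇑(hB.eigenvectorBasis j) = 0 := by
  simpa [EuclideanSpace.inner_eq_star_dotProduct, dotProduct_comm] using
    hB.eigenvectorBasis.orthonormal.2 hij

lemma exists_eq_vecMulVec_sub_vecMulVec (hpos : {i | 0 < hB.eigenvalues i}.Subsingleton)
    (hneg : {i | hB.eigenvalues i < 0}.Subsingleton) :
    ∃ v w : n → ℝ, B = vecMulVec v v - vecMulVec w w := by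
  obtain ⟨v, hv⟩ := exists_sum_smul_vecMulVec_self_eq (fun i => (hB.eigenvalues i)⁺)
    (fun _ => posPart_nonneg _) (by simpa only [posPart_pos_iff] using hpos)
    (hB.eigenvectorBasis ·)
  obtain ⟨w, hw⟩ := exists_sum_smul_vecMulVec_self_eq (fun i => (hB.eigenvalues i)⁻)
    (fun _ => negPart_nonneg _) (by simpa only [negPart_pos_iff] using hneg)
    (hB.eigenvectorBasis ·)
  refine ⟨v, w, ?_⟩
  conv_lhs => rw [hB.eq_sum_smul_vecMulVec_eigenvectorBasis]
  simp_rw [← hv, ← hw, ← Finset.sum_sub_distrib, ← sub_smul, posPart_sub_negPart]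

lemma not_eigenvalues_pos_of_eq_vecMulVec_sub {v w : n → ℝ}
    (hBvw : B = vecMulVec v v - vecMulVec w w) {i j : n} (hij : i ≠ j)
    (hi : 0 < hB.eigenvalues i) (hj : 0 < hB.eigenvalues j) : False :=
  not_pos_eigenvectors_of_eq_vecMulVec_sub hBvw (hB.mulVec_eigenvectorBasis i)
    (hB.mulVec_eigenvectorBasis j) (hB.dotProduct_eigenvectorBasis_self i)
    (hB.dotProduct_eigenvectorBasis_self j) (hB.dotProduct_eigenvectorBasis_of_ne hij) hi hj

lemma not_eigenvalues_neg_of_eq_vecMulVec_sub {v w : n → ℝ}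
    (hBvw : B = vecMulVec v v - vecMulVec w w) {i j : n} (hij : i ≠ j)
    (hi : hB.eigenvalues i < 0) (hj : hB.eigenvalues j < 0) : False := by
  have hnegB (k : n) :
      -B *ᵥ hB.eigenvectorBasis k = -hB.eigenvalues k • ⇑(hB.eigenvectorBasis k) := by
    rw [neg_mulVec, hB.mulVec_eigenvectorBasis, neg_smul]
  exact not_pos_eigenvectors_of_eq_vecMulVec_sub (by rw [hBvw, neg_sub]) (hnegB i) (hnegB j)
    (hB.dotProduct_eigenvectorBasis_self i) (hB.dotProduct_eigenvectorBasis_self j)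
    (hB.dotProduct_eigenvectorBasis_of_ne hij) (neg_pos.mpr hi) (neg_pos.mpr hj)

end IsHermitian

end Matrix

/-- A nonzero symmetric real d×d matrix B fails to have two nonzero eigenvalues
sharing the same sign iff B = vvᵀ − wwᵀ for some v, w with v ≠ ±w. -/
theorem no_two_same_sign_eigenvalues_iff {d : ℕ}
    (B : Matrix (Fin d) (Fin d) ℝ) (hB : B.IsHermitian) (hB0 : B ≠ 0) :
    (¬ ∃ i j : Fin d, i ≠ j ∧
        ((0 < hB.eigenvalues i ∧ 0 < hB.eigenvalues j) ∨
         (hB.eigenvalues i < 0 ∧ hB.eigenvalues j < 0))) ↔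
      ∃ v w : Fin d → ℝ, v ≠ w ∧ v ≠ -w ∧
        B = Matrix.vecMulVec v v - Matrix.vecMulVec w w := by
  constructor
  · intro h
    obtain ⟨v, w, hBvw⟩ := hB.exists_eq_vecMulVec_sub_vecMulVec
      (fun i hi j hj => by_contra fun hij => h ⟨i, j, hij, .inl ⟨hi, hj⟩⟩)
      (fun i hi j hj => by_contra fun hij => h ⟨i, j, hij, .inr ⟨hi, hj⟩⟩)
    refine ⟨v, w, ?_, ?_, hBvw⟩
    · rintro rfl
      exact hB0 (by rwa [sub_self] at hBvw)
    · rintro rfl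
      exact hB0 (by rwa [vecMulVec_neg_neg, sub_self] at hBvw)
  · rintro ⟨v, w, -, -, hBvw⟩ ⟨i, j, hij, ⟨hi, hj⟩ | ⟨hi, hj⟩⟩
    · exact hB.not_eigenvalues_pos_of_eq_vecMulVec_sub hBvw hij hi hj
    · exact hB.not_eigenvalues_neg_of_eq_vecMulVec_sub hBvw hij hi hj
end

section
/- For every real η ≥ 1, R ≥ 1 and integer r ≥ 1, the integral ∫_{−R}^{R} min(1, 1/(r‖ηz‖)) dz is at most C · R · log(e·r)/r for an absolute constant C, where ‖x‖ denotes distance to the nearest integer. -/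
open Real Function MeasureTheory intervalIntegral

/-!
The integrand is `min 1 (r‖u‖)⁻¹` evaluated at `u = ηz`, a `1`-periodic even function of `u`. On
`[0, 1/2]` it equals `min 1 (r u)⁻¹`, whose integral is at most `1/r` over `[0, 1/r]` plus
`(1/r) log r` over `[1/r, 1/2]`; so one period contributes `O(Log r / r)`. Substituting `u = ηz`
turns `[-R, R]` into `[-ηR, ηR]`, which is covered by at most `2⌈ηR⌉ ≤ 4ηR` periods, and the
factor `η` cancels against the Jacobian `η⁻¹`.
-/

lemma intervalIntegrable_min_one {g : ℝ → ℝ} {a b : ℝ} (hg : Measurable g)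
    (hg0 : ∀ x ∈ Set.uIoc a b, 0 ≤ g x) :
    IntervalIntegrable (fun x => min 1 (g x)) volume a b := by
  refine (intervalIntegrable_const (c := (1 : ℝ))).mono_fun'
    (measurable_const.min hg).aestronglyMeasurable
    ((ae_restrict_iff' measurableSet_uIoc).2 (Filter.Eventually.of_forall fun x hx => ?_))
  dsimp only
  rw [Real.norm_eq_abs, abs_of_nonneg (le_min zero_le_one (hg0 x hx))]
  exact min_le_left _ _

lemma Function.Periodic.integral_neg_le {f : ℝ → ℝ} {T a : ℝ} (hf : Periodic f T) (hT : 0 < T)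
    (hf0 : ∀ x, 0 ≤ f x) (hint : ∀ a b, IntervalIntegrable f volume a b) (ha : 0 ≤ a) :
    ∫ x in -a..a, f x ≤ 2 * ⌈a / T⌉₊ * ∫ x in 0..T, f x := by
  set n := ⌈a / T⌉₊
  have han : a ≤ n * T := (div_le_iff₀ hT).1 (Nat.le_ceil _)
  have hperiods : ∫ x in -(n * T)..n * T, f x = 2 * n * ∫ x in 0..T, f x := by
    have h := hf.intervalIntegral_add_zsmul_eq (2 * n) (-(n * T)) hint
    rw [hf.intervalIntegral_add_eq _ 0, zero_add, zsmul_eq_mul, zsmul_eq_mul] at h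
    push_cast at h
    rwa [show -(n * T) + 2 * n * T = n * T by ring] at h
  calc ∫ x in -a..a, f x ≤ ∫ x in -(n * T)..n * T, f x :=
        integral_mono_interval (by linarith) (by linarith) han
          (Filter.Eventually.of_forall hf0) (hint _ _)
    _ = 2 * n * ∫ x in 0..T, f x := hperiods

lemma integral_min_one_inv_mul_le {r t b : ℝ} (hr : 0 < r) (ht : 0 < t) (htb : t ≤ b) :
    ∫ x in 0..b, min 1 ((r * x)⁻¹) ≤ t + r⁻¹ * log (b / t) := by
  have hint : ∀ c, 0 ≤ c → IntervalIntegrable (fun x => min 1 ((r * x)⁻¹)) volume 0 c :=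
    fun c hc => intervalIntegrable_min_one (by fun_prop) fun x hx => by
      rw [Set.uIoc_of_le hc] at hx
      exact inv_nonneg.2 (mul_nonneg hr.le hx.1.le)
  have hint₀ := hint t ht.le
  have hint₁ := hint₀.symm.trans (hint b (ht.le.trans htb))
  have hinv : ∫ x in t..b, r⁻¹ * x⁻¹ = r⁻¹ * log (b / t) := by
    rw [intervalIntegral.integral_const_mul, integral_inv]
    rw [Set.uIcc_of_le htb]
    exact fun h => h.1.not_gt ht
  rw [← integral_add_adjacent_intervals hint₀ hint₁]
  gcongr
  · calc ∫ x in 0..t, min 1 ((r * x)⁻¹) ≤ ∫ x in 0..t, (1 : ℝ) :=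
          integral_mono_on ht.le hint₀ intervalIntegrable_const fun x _ => min_le_left _ _
      _ = t := by simp
  · rw [← hinv]
    refine integral_mono_on htb hint₁ ?_ fun x _ => ?_
    · refine (continuousOn_const.mul (continuousOn_inv₀.mono fun x hx => ?_)).intervalIntegrable
      rw [Set.uIcc_of_le htb] at hx
      exact (ht.trans_le hx.1).ne'
    · rw [← mul_inv]; exact min_le_right _ _

lemma integral_min_one_inv_mul_le_of_one_le {r : ℝ} (hr : 1 ≤ r) :
    ∫ x in 0..1 / 2, min 1 ((r * x)⁻¹) ≤ (1 + log r) / r := by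
  have hr0 : 0 < r := one_pos.trans_le hr
  set t := min (1 / 2) (1 / r) with ht_def
  have ht : 0 < t := lt_min one_half_pos (one_div_pos.2 hr0)
  have hlog : log (1 / 2 / t) ≤ log r := by
    refine log_le_log (div_pos one_half_pos ht) ((div_le_iff₀ ht).2 ?_)
    rcases le_total (1 / 2) (1 / r) with h | h
    · rw [ht_def, min_eq_left h]; linarith
    · rw [ht_def, min_eq_right h, mul_one_div_cancel hr0.ne']; norm_num
  calc ∫ x in 0..1 / 2, min 1 ((r * x)⁻¹) ≤ t + r⁻¹ * log (1 / 2 / t) :=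
        integral_min_one_inv_mul_le hr0 ht (min_le_left _ _)
    _ ≤ 1 / r + r⁻¹ * log r := by gcongr; exact min_le_right _ _
    _ = (1 + log r) / r := by ring

lemma continuous_abs_sub_round : Continuous fun u : ℝ => |u - round u| := by
  simp_rw [← UnitAddCircle.norm_eq]
  fun_prop

/-- At integers `u` this is `0` rather than `1`, since `0⁻¹ = 0`; integrals do not see it. -/
noncomputable def minInvDist (r u : ℝ) : ℝ := min 1 ((r * |u - round u|)⁻¹)

section minInvDist

variable {r : ℝ}

lemma minInvDist_nonneg (hr : 0 ≤ r) (u : ℝ) : 0 ≤ minInvDist r u :=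
  le_min zero_le_one (inv_nonneg.2 (mul_nonneg hr (abs_nonneg _)))

lemma intervalIntegrable_minInvDist (hr : 0 ≤ r) (a b : ℝ) :
    IntervalIntegrable (minInvDist r) volume a b :=
  intervalIntegrable_min_one (measurable_const.mul continuous_abs_sub_round.measurable).inv
    fun _ _ => inv_nonneg.2 (mul_nonneg hr (abs_nonneg _))

lemma periodic_minInvDist (r : ℝ) : Periodic (minInvDist r) 1 := by
  intro u
  simp only [minInvDist, ← UnitAddCircle.norm_eq]
  rw [AddCircle.coe_add_period]

lemma minInvDist_neg (r u : ℝ) : minInvDist r (-u) = minInvDist r u := by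
  simp only [minInvDist, ← UnitAddCircle.norm_eq, AddCircle.coe_neg, norm_neg]

lemma minInvDist_of_le_half {u : ℝ} (h0 : 0 ≤ u) (h : u ≤ 1 / 2) :
    minInvDist r u = min 1 ((r * u)⁻¹) := by
  rw [minInvDist, ← UnitAddCircle.norm_eq,
    (AddCircle.norm_coe_eq_abs_iff (p := 1) one_ne_zero).2, abs_of_nonneg h0]
  rwa [abs_one, abs_of_nonneg h0]

lemma integral_minInvDist_zero_one_le (hr : 1 ≤ r) :
    ∫ x in 0..1, minInvDist r x ≤ 2 * (1 + log r) / r := by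
  have hint := intervalIntegrable_minInvDist (zero_le_one.trans hr)
  have hhalf : ∫ x in 0..1 / 2, minInvDist r x ≤ (1 + log r) / r := by
    refine (integral_congr fun x hx => ?_).trans_le (integral_min_one_inv_mul_le_of_one_le hr)
    rw [Set.uIcc_of_le (by norm_num)] at hx
    exact minInvDist_of_le_half hx.1 hx.2
  have hsymm : ∫ x in -(1 / 2)..0, minInvDist r x = ∫ x in 0..1 / 2, minInvDist r x := by
    simpa only [minInvDist_neg, neg_zero] using (integral_comp_neg (a := 0) (b := 1 / 2)
      (minInvDist r)).symm
  calc ∫ x in 0..1, minInvDist r x = ∫ x in -(1 / 2)..1 / 2, minInvDist r x := by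
        simpa only [zero_add, show -(1 / 2) + 1 = (1 / 2 : ℝ) by norm_num] using
          (periodic_minInvDist r).intervalIntegral_add_eq 0 (-(1 / 2))
    _ = (∫ x in -(1 / 2)..0, minInvDist r x) + ∫ x in 0..1 / 2, minInvDist r x :=
        (integral_add_adjacent_intervals (hint _ _) (hint _ _)).symm
    _ ≤ (1 + log r) / r + (1 + log r) / r := by rw [hsymm]; exact add_le_add hhalf hhalf
    _ = 2 * (1 + log r) / r := by ring

end minInvDist

/-- There is an absolute constant C such that for all real η ≥ 1, R ≥ 1 and all
integers r ≥ 1, ∫_{−R}^{R} min(1, 1/(r‖ηz‖)) dz ≤ C · R · Log(r)/r, where ‖x‖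
denotes the distance from x to the nearest integer and Log(r) = max(1, log r). -/
theorem integral_min_inv_dist_bound :
    ∃ C : ℝ, 0 < C ∧ ∀ (η R : ℝ) (r : ℕ), 1 ≤ η → 1 ≤ R → 1 ≤ r →
      (∫ z in (-R)..R, min 1 ((r * |η * z - round (η * z)|)⁻¹)) ≤
        C * R * max 1 (Real.log r) / r := by
  refine ⟨16, by norm_num, fun η R r hη hR hr => ?_⟩
  have hr1 : (1 : ℝ) ≤ r := by exact_mod_cast hr
  have hr0 : (0 : ℝ) ≤ r := zero_le_one.trans hr1
  have hη0 : 0 < η := one_pos.trans_le hη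
  have hηR : 1 ≤ η * R := one_le_mul_of_one_le_of_one_le hη hR
  have hsub : ∫ z in -R..R, minInvDist r (η * z) =
      η⁻¹ * ∫ u in -(η * R)..η * R, minInvDist r u := by
    rw [integral_comp_mul_left _ hη0.ne', mul_neg, smul_eq_mul]
  have hperiods := (periodic_minInvDist r).integral_neg_le one_pos (minInvDist_nonneg hr0)
    (intervalIntegrable_minInvDist hr0) (zero_le_one.trans hηR)
  rw [div_one] at hperiods
  have hceil : (⌈η * R⌉₊ : ℝ) ≤ 2 * (η * R) := Nat.ceil_le_two_mul (by linarith)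
  have hlog : 1 + log r ≤ 2 * max 1 (log r) := by
    linarith [le_max_left 1 (log r), le_max_right 1 (log r)]
  change ∫ z in -R..R, minInvDist r (η * z) ≤ _
  calc ∫ z in -R..R, minInvDist r (η * z)
      ≤ η⁻¹ * (2 * ⌈η * R⌉₊ * (2 * (1 + log r) / r)) := by
        rw [hsub]
        gcongr
        exact hperiods.trans (by gcongr; exact integral_minInvDist_zero_one_le hr1)
    _ ≤ η⁻¹ * (2 * (2 * (η * R)) * (2 * (2 * max 1 (log r)) / r)) := by gcongr
    _ = 16 * R * max 1 (log r) / r := by field_simp; ring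
end

section
/- If ℓ < d, then there do not exist quadratic forms Q₁,…,Q_ℓ on ℝ^d such that the map v ↦ (Q₁(v),…,Q_ℓ(v)) is injective on pairs {v, −v}; i.e., there exist v, w ∈ ℝ^d with v ≠ ±w but Q_i(v) = Q_i(w) for all i. -/
/-!
Fix `e ≠ 0`. Since `ℓ < d`, the `ℓ` linear functionals `x ↦ polar Qᵢ e x` have a common zero
`x ≠ 0`, and then `Qᵢ (e + x) = Qᵢ e + Qᵢ x = Qᵢ (e - x)` for every `i`, while `e + x ≠ ±(e - x)`
because neither `x` nor `e` is zero.
-/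

open Matrix

namespace QuadraticMap

variable {R M N : Type*} [CommRing R] [AddCommGroup M] [AddCommGroup N] [Module R M] [Module R N]

theorem apply_add_eq_apply_sub_of_polar_eq_zero (Q : QuadraticMap R M N) {x y : M}
    (h : polar Q x y = 0) : Q (x + y) = Q (x - y) := by
  have h' : polar Q x (-y) = 0 := by rw [polar_neg_right, h, neg_zero]
  rw [polar, sub_sub, sub_eq_zero] at h h'
  rw [h, sub_eq_add_neg, h', Q.map_neg]

end QuadraticMap

theorem QuadraticForm.exists_ne_ne_neg_forall_apply_eq_of_card_lt_finrank
    {K V ι : Type*} [Field K] [AddCommGroup V] [Module K V] [FiniteDimensional K V]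
    [IsAddTorsionFree V] [Fintype ι] (Q : ι → QuadraticForm K V)
    (h : Fintype.card ι < Module.finrank K V) :
    ∃ v w : V, v ≠ w ∧ v ≠ -w ∧ ∀ i, Q i v = Q i w := by
  have : Nontrivial V := (Module.finrank_pos_iff (R := K)).mp (by omega)
  obtain ⟨e, he⟩ := exists_ne (0 : V)
  have hker : LinearMap.ker (LinearMap.pi fun i ↦ (Q i).polarBilin e) ≠ ⊥ :=
    LinearMap.ker_ne_bot_of_finrank_lt (by simpa using h)
  obtain ⟨x, hx, hx0⟩ := (Submodule.ne_bot_iff _).mp hker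
  refine ⟨e + x, e - x, fun hex ↦ hx0 ?_, fun hex ↦ he ?_, fun i ↦ ?_⟩
  · rw [sub_eq_add_neg] at hex
    exact self_eq_neg.mp (add_left_cancel hex)
  · rw [neg_sub, add_comm, sub_eq_add_neg] at hex
    exact self_eq_neg.mp (add_left_cancel hex)
  · exact (Q i).apply_add_eq_apply_sub_of_polar_eq_zero (congrFun hx i)

theorem forms_not_injective_of_few_general {d ℓ : ℕ} (h : ℓ < d)
    (Q : Fin ℓ → Matrix (Fin d) (Fin d) ℝ) :
    ∃ v w : Fin d → ℝ, v ≠ w ∧ v ≠ -w ∧ ∀ i, v ⬝ᵥ (Q i *ᵥ v) = w ⬝ᵥ (Q i *ᵥ w) := by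
  simpa [Matrix.toQuadraticForm', Matrix.toLinearMap₂'_apply'] using
    QuadraticForm.exists_ne_ne_neg_forall_apply_eq_of_card_lt_finrank
      (fun i ↦ (Q i).toQuadraticForm') (by simpa using h)

/-- If ℓ < d, then any ℓ quadratic forms on ℝ^d fail to be jointly injective on
pairs {v, −v}: there exist v, w with v ≠ ±w but Q_i(v) = Q_i(w) for all i. -/
theorem forms_not_injective_of_few {d ℓ : ℕ} (h : ℓ < d)
    (Q : Fin ℓ → Matrix (Fin d) (Fin d) ℝ) (hQ : ∀ i, (Q i).transpose = Q i) :
    ∃ v w : Fin d → ℝ, v ≠ w ∧ v ≠ -w ∧ ∀ i, v ⬝ᵥ (Q i *ᵥ v) = w ⬝ᵥ (Q i *ᵥ w) :=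
  forms_not_injective_of_few_general h Q
end

section
/- Let m = 2, d = 3, and let γ : Sym²ℝ³ → ℝ send a symmetric 3×3 matrix to its middle eigenvalue. Then γ is continuous, γ(−A) = −γ(A), and γ(A) = 0 if and only if A ∈ S := {vvᵀ − wwᵀ : v, w ∈ ℝ³}. -/
open Matrix

/-!
Let `λ₁ ≤ λ₂ ≤ λ₃` be the eigenvalues of `A`. Then `λ₃` is the maximum of `xᵀAx` on the unit
sphere and `λ₁ = -λ₃(-A)`, so `λ₂ = tr A + λ₃(-A) - λ₃(A)`; a maximum over a compact set of a
jointly continuous function depends continuously on the parameter, which gives continuity, and the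
formula is visibly odd. If `λ₂ = 0`, the spectral decomposition reads `A = λ₃ e₃e₃ᵀ - (-λ₁) e₁e₁ᵀ`.
Conversely, if `A = vvᵀ - wwᵀ`, the plane spanned by `e₁, e₂` meets `w^⊥` in some `x ≠ 0`, and
`0 ≤ (v ⬝ x)² = xᵀAx ≤ λ₂ |x|²`; symmetrically, using `e₂, e₃` and `v^⊥`, `λ₂ ≤ 0`.
-/

theorem Monotone.isLeast_range_of_comp {α ι : Type*} [Preorder α] {m : ℕ} {f : ι → α}
    {σ : Fin (m + 1) ≃ ι} (h : Monotone (f ∘ σ)) : IsLeast (Set.range f) (f (σ 0)) := by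
  refine ⟨⟨_, rfl⟩, ?_⟩
  rintro _ ⟨i, rfl⟩
  simpa using h (Fin.zero_le (σ.symm i))

theorem Monotone.isGreatest_range_of_comp {α ι : Type*} [Preorder α] {m : ℕ} {f : ι → α}
    {σ : Fin (m + 1) ≃ ι} (h : Monotone (f ∘ σ)) :
    IsGreatest (Set.range f) (f (σ (Fin.last m))) := by
  refine ⟨⟨_, rfl⟩, ?_⟩
  rintro _ ⟨i, rfl⟩
  simpa using h (Fin.le_last (σ.symm i))

namespace Matrix

variable {n : Type*}

theorem vecMulVec_sqrt_smul_self {a : ℝ} (ha : 0 ≤ a) (u : n → ℝ) :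
    vecMulVec (√a • u) (√a • u) = a • vecMulVec u u := by
  rw [smul_vecMulVec, vecMulVec_smul, smul_smul, Real.mul_self_sqrt ha]

variable [Fintype n]

theorem dotProduct_vecMulVec_self_mulVec (v x : n → ℝ) :
    x ⬝ᵥ vecMulVec v v *ᵥ x = (v ⬝ᵥ x) ^ 2 := by
  rw [vecMulVec_mulVec, op_smul_eq_smul, dotProduct_smul, smul_eq_mul, dotProduct_comm, sq]

/-- By the Rayleigh principle, the largest eigenvalue of a symmetric matrix. -/
noncomputable def rayleighMax (A : Matrix n n ℝ) : ℝ :=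
  sSup ((fun x : EuclideanSpace ℝ n => ⇑x ⬝ᵥ A *ᵥ ⇑x) '' Metric.sphere 0 1)

theorem continuous_rayleighMax : Continuous (rayleighMax : Matrix n n ℝ → ℝ) :=
  (isCompact_sphere 0 1).continuous_sSup (by fun_prop)

theorem rayleighMax_eq_of_forall_le {A : Matrix n n ℝ} {μ : ℝ}
    (hle : ∀ x : n → ℝ, x ⬝ᵥ A *ᵥ x ≤ μ * (x ⬝ᵥ x))
    {y : n → ℝ} (hy : y ⬝ᵥ y = 1) (hyμ : y ⬝ᵥ A *ᵥ y = μ) : A.rayleighMax = μ := by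
  have hsphere (x : EuclideanSpace ℝ n) : x ∈ Metric.sphere 0 1 ↔ ⇑x ⬝ᵥ ⇑x = 1 := by
    rw [mem_sphere_zero_iff_norm, ← pow_eq_one_iff_of_nonneg (norm_nonneg x) two_ne_zero,
      ← real_inner_self_eq_norm_sq]
    rfl
  refine IsGreatest.csSup_eq ⟨⟨WithLp.toLp 2 y, (hsphere _).2 hy, hyμ⟩, ?_⟩
  rintro _ ⟨x, hx, rfl⟩
  simpa [(hsphere x).1 hx] using hle x

namespace IsHermitian

section

variable [DecidableEq n] {A : Matrix n n ℝ} (hA : A.IsHermitian)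

theorem eigenvectorBasis_dotProduct (i j : n) :
    ⇑(hA.eigenvectorBasis i) ⬝ᵥ ⇑(hA.eigenvectorBasis j) = if i = j then 1 else 0 := by
  rw [dotProduct_comm, ← orthonormal_iff_ite.mp hA.eigenvectorBasis.orthonormal i j]
  rfl

theorem eigenvectorBasis_dotProduct_mulVec (i : n) :
    ⇑(hA.eigenvectorBasis i) ⬝ᵥ A *ᵥ ⇑(hA.eigenvectorBasis i) = hA.eigenvalues i := by
  simp [mulVec_eigenvectorBasis, eigenvectorBasis_dotProduct]

theorem sum_dotProduct_smul_eigenvectorBasis (x : n → ℝ) :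
    ∑ i, (⇑(hA.eigenvectorBasis i) ⬝ᵥ x) • ⇑(hA.eigenvectorBasis i) = x := by
  have := congrArg WithLp.ofLp (hA.eigenvectorBasis.sum_repr' (WithLp.toLp 2 x))
  simpa [EuclideanSpace.inner_eq_star_dotProduct, dotProduct_comm] using this

theorem sum_sq_dotProduct_eigenvectorBasis (x : n → ℝ) :
    ∑ i, (⇑(hA.eigenvectorBasis i) ⬝ᵥ x) ^ 2 = x ⬝ᵥ x := by
  conv_rhs => arg 2; rw [← hA.sum_dotProduct_smul_eigenvectorBasis x]
  rw [dotProduct_sum]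
  simp only [smul_dotProduct, smul_eq_mul, dotProduct_comm x, sq]

theorem mulVec_eq_sum (x : n → ℝ) :
    A *ᵥ x = ∑ i, (hA.eigenvalues i * (⇑(hA.eigenvectorBasis i) ⬝ᵥ x)) •
      ⇑(hA.eigenvectorBasis i) := by
  conv_lhs => rw [← hA.sum_dotProduct_smul_eigenvectorBasis x]
  simp [mulVec_sum, mulVec_smul, mulVec_eigenvectorBasis, smul_smul, mul_comm]

theorem dotProduct_mulVec_eq_sum (x : n → ℝ) :
    x ⬝ᵥ A *ᵥ x = ∑ i, hA.eigenvalues i * (⇑(hA.eigenvectorBasis i) ⬝ᵥ x) ^ 2 := by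
  rw [hA.mulVec_eq_sum, dotProduct_comm, sum_dotProduct]
  simp only [smul_dotProduct, smul_eq_mul, sq, mul_assoc]

theorem eq_sum_eigenvalues_smul_vecMulVec :
    A = ∑ i, hA.eigenvalues i • vecMulVec ⇑(hA.eigenvectorBasis i) ⇑(hA.eigenvectorBasis i) := by
  refine mulVec_injective (funext fun x => ?_)
  simp only [hA.mulVec_eq_sum, sum_mulVec, smul_mulVec, vecMulVec_mulVec, op_smul_eq_smul,
    smul_smul]

theorem dotProduct_mulVec_le {x : n → ℝ} {μ : ℝ}
    (h : ∀ i, ⇑(hA.eigenvectorBasis i) ⬝ᵥ x ≠ 0 → hA.eigenvalues i ≤ μ) :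
    x ⬝ᵥ A *ᵥ x ≤ μ * (x ⬝ᵥ x) := by
  rw [hA.dotProduct_mulVec_eq_sum, ← hA.sum_sq_dotProduct_eigenvectorBasis, Finset.mul_sum]
  refine Finset.sum_le_sum fun i _ => ?_
  by_cases hi : ⇑(hA.eigenvectorBasis i) ⬝ᵥ x = 0
  · simp [hi]
  · exact mul_le_mul_of_nonneg_right (h i hi) (sq_nonneg _)

theorem le_dotProduct_mulVec {x : n → ℝ} {μ : ℝ}
    (h : ∀ i, ⇑(hA.eigenvectorBasis i) ⬝ᵥ x ≠ 0 → μ ≤ hA.eigenvalues i) :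
    μ * (x ⬝ᵥ x) ≤ x ⬝ᵥ A *ᵥ x := by
  rw [hA.dotProduct_mulVec_eq_sum, ← hA.sum_sq_dotProduct_eigenvectorBasis, Finset.mul_sum]
  refine Finset.sum_le_sum fun i _ => ?_
  by_cases hi : ⇑(hA.eigenvectorBasis i) ⬝ᵥ x = 0
  · simp [hi]
  · exact mul_le_mul_of_nonneg_right (h i hi) (sq_nonneg _)

theorem rayleighMax_eq_of_isGreatest {μ : ℝ} (hμ : IsGreatest (Set.range hA.eigenvalues) μ) :
    A.rayleighMax = μ := by
  obtain ⟨⟨i, rfl⟩, hle⟩ := hμ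
  exact rayleighMax_eq_of_forall_le (fun x => hA.dotProduct_mulVec_le fun k _ => hle ⟨k, rfl⟩)
    (by simp [eigenvectorBasis_dotProduct]) (hA.eigenvectorBasis_dotProduct_mulVec i)

theorem rayleighMax_neg_eq_of_isLeast {μ : ℝ} (hμ : IsLeast (Set.range hA.eigenvalues) μ) :
    (-A).rayleighMax = -μ := by
  obtain ⟨⟨i, rfl⟩, hle⟩ := hμ
  refine rayleighMax_eq_of_forall_le (fun x => ?_) (y := ⇑(hA.eigenvectorBasis i))
    (by simp [eigenvectorBasis_dotProduct])
    (by simp [neg_mulVec, eigenvectorBasis_dotProduct_mulVec])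
  simpa [neg_mulVec] using hA.le_dotProduct_mulVec (x := x) fun k _ => hle ⟨k, rfl⟩

/-- The last condition says that `x` lies in the span of the `i`-th and `j`-th eigenvectors. -/
theorem exists_dotProduct_eq_zero_mem_span_pair (w : n → ℝ) {i j : n} (hij : i ≠ j) :
    ∃ x : n → ℝ, w ⬝ᵥ x = 0 ∧ 0 < x ⬝ᵥ x ∧
      ∀ k, ⇑(hA.eigenvectorBasis k) ⬝ᵥ x ≠ 0 → k = i ∨ k = j := by
  obtain ⟨s, t, hst, hw⟩ : ∃ s t : ℝ, (s ≠ 0 ∨ t ≠ 0) ∧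
      s * (w ⬝ᵥ ⇑(hA.eigenvectorBasis i)) + t * (w ⬝ᵥ ⇑(hA.eigenvectorBasis j)) = 0 := by
    by_cases hj : w ⬝ᵥ ⇑(hA.eigenvectorBasis j) = 0
    · exact ⟨0, 1, by simp, by simp [hj]⟩
    · exact ⟨w ⬝ᵥ ⇑(hA.eigenvectorBasis j), -(w ⬝ᵥ ⇑(hA.eigenvectorBasis i)), .inl hj, by ring⟩
  refine ⟨s • ⇑(hA.eigenvectorBasis i) + t • ⇑(hA.eigenvectorBasis j), ?_, ?_, fun k hk => ?_⟩
  · simpa [dotProduct_add, dotProduct_smul] using hw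
  · simp only [dotProduct_add, dotProduct_smul, add_dotProduct, smul_dotProduct,
      hA.eigenvectorBasis_dotProduct, if_pos, if_neg hij, if_neg hij.symm, smul_eq_mul, mul_one,
      mul_zero, add_zero, zero_add]
    rcases hst with h | h <;> nlinarith [mul_self_pos.2 h, mul_self_nonneg s, mul_self_nonneg t]
  · by_contra! hk'
    simp [dotProduct_add, dotProduct_smul, hA.eigenvectorBasis_dotProduct, hk'.1, hk'.2] at hk

/-- A quadratic form that is nonnegative on a hyperplane has at most one negative eigenvalue. -/
theorem zero_le_max_eigenvalues (w : n → ℝ) (hw : ∀ x, w ⬝ᵥ x = 0 → 0 ≤ x ⬝ᵥ A *ᵥ x)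
    {i j : n} (hij : i ≠ j) : 0 ≤ max (hA.eigenvalues i) (hA.eigenvalues j) := by
  obtain ⟨x, hwx, hx, hspan⟩ := hA.exists_dotProduct_eq_zero_mem_span_pair w hij
  have hle : x ⬝ᵥ A *ᵥ x ≤ max (hA.eigenvalues i) (hA.eigenvalues j) * (x ⬝ᵥ x) :=
    hA.dotProduct_mulVec_le fun k hk => by rcases hspan k hk with rfl | rfl <;> simp
  exact nonneg_of_mul_nonneg_left ((hw x hwx).trans hle) hx

theorem min_eigenvalues_nonpos (v : n → ℝ) (hv : ∀ x, v ⬝ᵥ x = 0 → x ⬝ᵥ A *ᵥ x ≤ 0)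
    {i j : n} (hij : i ≠ j) : min (hA.eigenvalues i) (hA.eigenvalues j) ≤ 0 := by
  obtain ⟨x, hvx, hx, hspan⟩ := hA.exists_dotProduct_eq_zero_mem_span_pair v hij
  have hle : min (hA.eigenvalues i) (hA.eigenvalues j) * (x ⬝ᵥ x) ≤ x ⬝ᵥ A *ᵥ x :=
    hA.le_dotProduct_mulVec fun k hk => by rcases hspan k hk with rfl | rfl <;> simp
  exact nonpos_of_mul_nonpos_left (hle.trans (hv x hvx)) hx

end

section

variable {A : Matrix (Fin 3) (Fin 3) ℝ} (hA : A.IsHermitian) {σ : Equiv.Perm (Fin 3)}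

theorem eigenvalues_perm_one_eq_trace_add_rayleighMax_neg_sub
    (hσ : Monotone (hA.eigenvalues ∘ σ)) :
    hA.eigenvalues (σ 1) = A.trace + (-A).rayleighMax - A.rayleighMax := by
  rw [hA.trace_eq_sum_eigenvalues, ← Equiv.sum_comp σ, Fin.sum_univ_three,
    hA.rayleighMax_neg_eq_of_isLeast hσ.isLeast_range_of_comp,
    hA.rayleighMax_eq_of_isGreatest hσ.isGreatest_range_of_comp]
  simp only [Real.ringHom_apply, Fin.reduceLast]
  ring

theorem eigenvalues_perm_one_eq_zero_iff (hσ : Monotone (hA.eigenvalues ∘ σ)) :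
    hA.eigenvalues (σ 1) = 0 ↔ ∃ v w : Fin 3 → ℝ, A = vecMulVec v v - vecMulVec w w := by
  constructor
  · intro h1
    have h0 : hA.eigenvalues (σ 0) ≤ 0 := h1 ▸ hσ (by decide : (0 : Fin 3) ≤ 1)
    have h2 : 0 ≤ hA.eigenvalues (σ 2) := h1 ▸ hσ (by decide : (1 : Fin 3) ≤ 2)
    refine ⟨√(hA.eigenvalues (σ 2)) • ⇑(hA.eigenvectorBasis (σ 2)),
      √(-hA.eigenvalues (σ 0)) • ⇑(hA.eigenvectorBasis (σ 0)), ?_⟩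
    rw [vecMulVec_sqrt_smul_self h2, vecMulVec_sqrt_smul_self (neg_nonneg.2 h0)]
    conv_lhs =>
      rw [hA.eq_sum_eigenvalues_smul_vecMulVec, ← Equiv.sum_comp σ, Fin.sum_univ_three, h1]
    module
  · rintro ⟨v, w, rfl⟩
    have hqf (x : Fin 3 → ℝ) :
        x ⬝ᵥ (vecMulVec v v - vecMulVec w w) *ᵥ x = (v ⬝ᵥ x) ^ 2 - (w ⬝ᵥ x) ^ 2 := by
      rw [sub_mulVec, dotProduct_sub, dotProduct_vecMulVec_self_mulVec,
        dotProduct_vecMulVec_self_mulVec]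
    refine le_antisymm ?_ ?_
    · have := hA.min_eigenvalues_nonpos v (fun x hx => by simpa [hqf, hx] using sq_nonneg (w ⬝ᵥ x))
        (σ.injective.ne (by decide : (1 : Fin 3) ≠ 2))
      rwa [min_eq_left (show hA.eigenvalues (σ 1) ≤ hA.eigenvalues (σ 2) from hσ (by decide))]
        at this
    · have := hA.zero_le_max_eigenvalues w (fun x hx => by simpa [hqf, hx] using sq_nonneg (v ⬝ᵥ x))
        (σ.injective.ne (by decide : (0 : Fin 3) ≠ 1))
      rwa [max_eq_right (show hA.eigenvalues (σ 0) ≤ hA.eigenvalues (σ 1) from hσ (by decide))]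
        at this

end

end IsHermitian

end Matrix

/-- Let γ send each symmetric 3×3 real matrix to its middle eigenvalue (the
second one when the eigenvalues are listed in nondecreasing order). Then γ is
continuous on the symmetric matrices, odd, and γ(A) = 0 iff A = vvᵀ − wwᵀ for
some v, w ∈ ℝ³. -/
theorem middle_eigenvalue_properties
    (γ : Matrix (Fin 3) (Fin 3) ℝ → ℝ)
    (hγ : ∀ (A : Matrix (Fin 3) (Fin 3) ℝ) (hA : A.IsHermitian),
      ∃ σ : Equiv.Perm (Fin 3), Monotone (hA.eigenvalues ∘ σ) ∧
        γ A = hA.eigenvalues (σ 1)) :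
    ContinuousOn γ {A : Matrix (Fin 3) (Fin 3) ℝ | A.IsHermitian} ∧
    (∀ A : Matrix (Fin 3) (Fin 3) ℝ, A.IsHermitian → γ (-A) = -γ A) ∧
    (∀ A : Matrix (Fin 3) (Fin 3) ℝ, A.IsHermitian →
      (γ A = 0 ↔ ∃ v w : Fin 3 → ℝ, A = vecMulVec v v - vecMulVec w w)) := by
  have key (A : Matrix (Fin 3) (Fin 3) ℝ) (hA : A.IsHermitian) :
      γ A = A.trace + (-A).rayleighMax - A.rayleighMax := by
    obtain ⟨σ, hσ, hγA⟩ := hγ A hA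
    exact hγA.trans (hA.eigenvalues_perm_one_eq_trace_add_rayleighMax_neg_sub hσ)
  refine ⟨?_, fun A hA => ?_, fun A hA => ?_⟩
  · refine ContinuousOn.congr (Continuous.continuousOn ?_) key
    exact (continuous_id.matrix_trace.add (continuous_rayleighMax.comp continuous_neg)).sub
      continuous_rayleighMax
  · rw [key _ hA.neg, key A hA, neg_neg, trace_neg]
    ring
  · obtain ⟨σ, hσ, hγA⟩ := hγ A hA
    rw [hγA, hA.eigenvalues_perm_one_eq_zero_iff hσ]
end

section
/- There is no 2-dimensional subspace V of the 6-dimensional space Sym²ℝ³ such that every nonzero element of V has at least two nonzero eigenvalues of the same sign; equivalently, for d = 3, m = 2 there is no linear map A : Sym²ℝ³ → ℝ² satisfying the Dodson–Rynne–Vickers eigenvalue condition. -/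
/-!
Say that `B` has a positive-definite plane if its quadratic form is positive definite on some
2-plane; for symmetric `B` this means that `B` has at least two positive eigenvalues. In `ℝ³` two
planes always meet, so `B` and `-B` never both have one, and having one is an open condition.
If every nonzero `B` in a plane `V` of symmetric matrices satisfied the eigenvalue condition,
`V ∖ {0}` would be covered by the disjoint open sets where `B`, respectively `-B`, has a
positive-definite plane. These sets are exchanged by `B ↦ -B`, so both are nonempty, contradicting
the connectedness of `V ∖ {0}`.
-/

open Matrix

lemma forall_pos_binary_quadratic_iff {α β γ : ℝ} :
    (∀ a b : ℝ, (a, b) ≠ 0 → 0 < α * a ^ 2 + β * a * b + γ * b ^ 2) ↔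
      0 < α ∧ β ^ 2 < 4 * α * γ := by
  constructor
  · intro h
    have hα : 0 < α := by simpa using h 1 0 (by simp)
    -- at `(a, b) = (-β, 2α)` the form takes the value `α (4αγ - β²)`
    have := h (-β) (2 * α) (by simp [hα.ne'])
    exact ⟨hα, by nlinarith⟩
  · rintro ⟨hα, hdisc⟩ a b hab
    -- `4α (αa² + βab + γb²) = (2αa + βb)² + (4αγ - β²) b²`
    rcases eq_or_ne b 0 with rfl | hb
    · have := sq_pos_of_ne_zero (a := a) (by simpa using hab)
      nlinarith
    · have := sq_pos_of_ne_zero hb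
      nlinarith [sq_nonneg (2 * α * a + β * b)]

lemma exists_ne_zero_notMem_of_forall_neg_notMem {F E : Type*} [AddCommGroup F] [Module ℝ F]
    [TopologicalSpace F] [IsTopologicalAddGroup F] [ContinuousSMul ℝ F] [TopologicalSpace E]
    [Neg E] (hF : 1 < Module.rank ℝ F) {S : Set E} (hS : IsOpen S) (hSneg : ∀ y ∈ S, -y ∉ S)
    {f : F → E} (hf : Continuous f) (hodd : ∀ x, f (-x) = -f x) :
    ∃ x ≠ 0, f x ∉ S ∧ -f x ∉ S := by
  by_contra! hcover
  have hU : IsOpen (f ⁻¹' S) := hS.preimage hf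
  have hW : IsOpen ((fun x => f (-x)) ⁻¹' S) := hS.preimage (hf.comp continuous_neg)
  have hdisj : Disjoint (f ⁻¹' S) ((fun x => f (-x)) ⁻¹' S) :=
    Set.disjoint_left.2 fun x hx hx' => hSneg _ hx (hodd x ▸ hx')
  have hsub : ({0}ᶜ : Set F) ⊆ f ⁻¹' S ∪ (fun x => f (-x)) ⁻¹' S := fun x hx => by
    by_cases hfx : f x ∈ S
    · exact Or.inl hfx
    · exact Or.inr (by simpa [hodd] using hcover x hx hfx)
  have : Nontrivial F := rank_pos_iff_nontrivial.1 (zero_lt_one.trans hF)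
  obtain ⟨x₀, hx₀⟩ := exists_ne (0 : F)
  have hx₀' : -x₀ ≠ 0 := neg_ne_zero.2 hx₀
  rcases (isConnected_compl_singleton_of_one_lt_rank hF 0).isPreconnected.subset_or_subset
    hU hW hdisj hsub with h | h
  · exact Set.disjoint_left.1 hdisj (h hx₀) (h hx₀')
  · exact Set.disjoint_left.1 hdisj (by simpa using h hx₀') (h hx₀)

variable {n : Type*} [Fintype n]

def HasPosDefPlane (B : Matrix n n ℝ) : Prop :=
  ∃ u w : n → ℝ, ∀ a b : ℝ, (a, b) ≠ 0 → 0 < (a • u + b • w) ⬝ᵥ B *ᵥ (a • u + b • w)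

lemma dotProduct_mulVec_add_smul (B : Matrix n n ℝ) (u w : n → ℝ) (a b : ℝ) :
    (a • u + b • w) ⬝ᵥ B *ᵥ (a • u + b • w) =
      (u ⬝ᵥ B *ᵥ u) * a ^ 2 + (u ⬝ᵥ B *ᵥ w + w ⬝ᵥ B *ᵥ u) * a * b + (w ⬝ᵥ B *ᵥ w) * b ^ 2 := by
  simp only [mulVec_add, mulVec_smul, add_dotProduct, dotProduct_add, smul_dotProduct,
    dotProduct_smul, smul_eq_mul]
  ring

lemma isOpen_setOf_hasPosDefPlane : IsOpen {B : Matrix n n ℝ | HasPosDefPlane B} := by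
  have : {B : Matrix n n ℝ | HasPosDefPlane B} = ⋃ (u) (w), {B | 0 < u ⬝ᵥ B *ᵥ u ∧
      (u ⬝ᵥ B *ᵥ w + w ⬝ᵥ B *ᵥ u) ^ 2 < 4 * (u ⬝ᵥ B *ᵥ u) * (w ⬝ᵥ B *ᵥ w)} := by
    ext B
    simp only [HasPosDefPlane, dotProduct_mulVec_add_smul, forall_pos_binary_quadratic_iff,
      Set.mem_ofPred_eq, Set.mem_iUnion]
  rw [this]
  refine isOpen_iUnion fun u => isOpen_iUnion fun w => ?_
  simp only [Set.ofPred_and]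
  exact (isOpen_lt continuous_const (by fun_prop)).inter (isOpen_lt (by fun_prop) (by fun_prop))

-- The two planes meet in a nonzero vector, where both quadratic forms would be positive.
lemma HasPosDefPlane.not_neg (hn : Fintype.card n ≤ 3) {B : Matrix n n ℝ}
    (hB : HasPosDefPlane B) : ¬ HasPosDefPlane (-B) := by
  rintro ⟨u', w', h'⟩
  obtain ⟨u, w, h⟩ := hB
  have hdep : ¬ LinearIndependent ℝ ![u, w, u', w'] := fun hli => by
    have := hli.fintype_card_le_finrank
    rw [Fintype.card_fin, Module.finrank_fintype_fun_eq_card] at this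
    omega
  obtain ⟨a, b, c, d, hne, hx⟩ : ∃ a b c d : ℝ,
      ((a, b) ≠ 0 ∨ (c, d) ≠ 0) ∧ a • u + b • w = c • u' + d • w' := by
    obtain ⟨g, hg, i, hi⟩ := Fintype.not_linearIndependent_iff.1 hdep
    refine ⟨g 0, g 1, -g 2, -g 3, ?_, ?_⟩
    · fin_cases i <;> simp_all
    · simp only [Fin.sum_univ_four, Matrix.cons_val] at hg
      linear_combination (norm := module) hg
  have hq := h a b
  have hq' := h' c d
  rw [hx] at hq
  rw [neg_mulVec, dotProduct_neg, neg_pos] at hq'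
  rcases hne with hne | hne
  · by_cases hcd : (c, d) = 0
    · obtain ⟨rfl, rfl⟩ := Prod.mk_eq_zero.1 hcd
      simpa using hq hne
    · linarith [hq hne, hq' hcd]
  · by_cases hab : (a, b) = 0
    · obtain ⟨rfl, rfl⟩ := Prod.mk_eq_zero.1 hab
      simpa [← hx] using hq' hne
    · linarith [hq hab, hq' hne]

lemma Matrix.IsHermitian.eigenvectorBasis_dotProduct_s16 [DecidableEq n] {B : Matrix n n ℝ}
    (hB : B.IsHermitian) (k l : n) :
    ⇑(hB.eigenvectorBasis k) ⬝ᵥ ⇑(hB.eigenvectorBasis l) = if k = l then 1 else 0 := by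
  rw [← orthonormal_iff_ite.1 hB.eigenvectorBasis.orthonormal k l,
    EuclideanSpace.inner_eq_star_dotProduct, star_trivial, dotProduct_comm]

lemma Matrix.IsHermitian.hasPosDefPlane_or_neg [DecidableEq n] {B : Matrix n n ℝ}
    (hB : B.IsHermitian) {i j : n} (hij : i ≠ j)
    (hsign : (0 < hB.eigenvalues i ∧ 0 < hB.eigenvalues j) ∨
      (hB.eigenvalues i < 0 ∧ hB.eigenvalues j < 0)) :
    HasPosDefPlane B ∨ HasPosDefPlane (-B) := by
  set u : n → ℝ := ⇑(hB.eigenvectorBasis i)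
  set w : n → ℝ := ⇑(hB.eigenvectorBasis j)
  have hq : ∀ a b : ℝ, (a • u + b • w) ⬝ᵥ B *ᵥ (a • u + b • w) =
      hB.eigenvalues i * a ^ 2 + 0 * a * b + hB.eigenvalues j * b ^ 2 := fun a b => by
    rw [dotProduct_mulVec_add_smul]
    simp only [u, w, hB.mulVec_eigenvectorBasis, dotProduct_smul, smul_eq_mul,
      hB.eigenvectorBasis_dotProduct_s16]
    simp [hij, hij.symm]
  have hq' : ∀ a b : ℝ, (a • u + b • w) ⬝ᵥ -B *ᵥ (a • u + b • w) =
      -hB.eigenvalues i * a ^ 2 + 0 * a * b + -hB.eigenvalues j * b ^ 2 := fun a b => by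
    rw [neg_mulVec, dotProduct_neg, hq]
    ring
  refine hsign.imp (fun ⟨hi, hj⟩ => ⟨u, w, fun a b => ?_⟩) (fun ⟨hi, hj⟩ => ⟨u, w, fun a b => ?_⟩)
  · rw [hq]
    exact forall_pos_binary_quadratic_iff.2 ⟨hi, by nlinarith⟩ a b
  · rw [hq']
    exact forall_pos_binary_quadratic_iff.2 ⟨by linarith, by nlinarith⟩ a b

/-- There is no 2-dimensional subspace V of the symmetric 3×3 real matrices
such that every nonzero element of V has at least two nonzero eigenvalues of
the same sign. -/
theorem no_two_dim_subspace_two_same_sign :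
    ¬ ∃ V : Submodule ℝ (Matrix (Fin 3) (Fin 3) ℝ),
        (∀ B ∈ V, B.transpose = B) ∧ Module.finrank ℝ V = 2 ∧
        ∀ B ∈ V, B ≠ 0 → ∀ (hB : B.IsHermitian),
          ∃ i j : Fin 3, i ≠ j ∧
            ((0 < hB.eigenvalues i ∧ 0 < hB.eigenvalues j) ∨
             (hB.eigenvalues i < 0 ∧ hB.eigenvalues j < 0)) := by
  rintro ⟨V, hsymm, hrank, H⟩
  have hV : 1 < Module.rank ℝ V := by rw [← Module.finrank_eq_rank, hrank]; norm_num
  obtain ⟨B, hB0, hBpos, hBneg⟩ := exists_ne_zero_notMem_of_forall_neg_notMem hV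
    isOpen_setOf_hasPosDefPlane (fun B hB => hB.not_neg (by simp)) continuous_subtype_val
    fun B => rfl
  have hB : (B : Matrix (Fin 3) (Fin 3) ℝ).IsHermitian :=
    (conjTranspose_eq_transpose_of_trivial _).trans (hsymm B B.2)
  obtain ⟨i, j, hij, hsign⟩ := H B B.2 (by simpa using hB0) hB
  exact (hB.hasPosDefPlane_or_neg hij hsign).elim hBpos hBneg
end

section
/- Fix n ≥ 1 and ψ : ℕ → (0,∞) with ∑_{q=1}^∞ ψ(q)^n < ∞. Then for every θ ∈ ℝ^n, the set S(ψ,θ) = { x ∈ ℝ^n : ‖qx − θ‖ < ψ(q) for infinitely many q ∈ ℕ } has Lebesgue measure zero. -/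
open MeasureTheory Set Filter
open scoped ENNReal NNReal

/-- Convergence case of the inhomogeneous Khinchin theorem: if
∑ ψ(q)ⁿ < ∞ then for every θ ∈ ℝⁿ, the set of x ∈ ℝⁿ with
‖qx − θ‖ < ψ(q) for infinitely many q ∈ ℕ has Lebesgue measure zero (here
‖y‖ = min_{p ∈ ℤⁿ} max_i |yᵢ − pᵢ|). -/
theorem khinchin_convergence {n : ℕ} (hn : 1 ≤ n)
    (ψ : ℕ → ℝ) (hψ : ∀ q, 0 < ψ q)
    (hsum : Summable fun q => ψ q ^ n) (θ : Fin n → ℝ) :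
    volume {x : Fin n → ℝ |
      {q : ℕ | 0 < q ∧ ∃ p : Fin n → ℤ,
        ∀ i, |(q : ℝ) * x i - θ i - (p i : ℝ)| < ψ q}.Infinite} = 0 := by
  classical
  -- bound on ψ
  obtain ⟨C, hC⟩ : ∃ C : ℝ, ∀ q, ψ q ^ n ≤ C := by
    obtain ⟨C, hC⟩ := (hsum.tendsto_atTop_zero).bddAbove_range
    exact ⟨C, fun q => hC ⟨q, rfl⟩⟩
  set Cψ : ℝ := max 1 C with hCψdef
  have hCψ : ∀ q, ψ q ≤ Cψ := by
    intro q
    rcases le_or_gt (ψ q) 1 with h | h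
    · exact h.trans (le_max_left _ _)
    · calc ψ q ≤ ψ q ^ n := le_self_pow₀ h.le (by omega)
        _ ≤ C := hC q
        _ ≤ Cψ := le_max_right _ _
  have hCψ1 : (1:ℝ) ≤ Cψ := le_max_left _ _
  -- A q
  set A : ℕ → Set (Fin n → ℝ) := fun q =>
    {x | ∃ p : Fin n → ℤ, ∀ i, |(q : ℝ) * x i - θ i - (p i : ℝ)| < ψ q} with hA
  set S : Set (Fin n → ℝ) :=
    {x | {q : ℕ | 0 < q ∧ x ∈ A q}.Infinite} with hS
  -- key per-cube estimate
  have key : ∀ M : ℕ, volume (S ∩ Icc (fun _ => -(M:ℝ)) (fun _ => (M:ℝ))) = 0 := by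
    intro M
    set cube : Set (Fin n → ℝ) := Icc (fun _ => -(M:ℝ)) (fun _ => (M:ℝ)) with hcube
    set K : ℕ := M + ⌈‖θ‖⌉₊ + ⌈Cψ⌉₊ with hK
    have hK1 : 1 ≤ K := by
      have : 1 ≤ ⌈Cψ⌉₊ := Nat.one_le_ceil_iff.2 (by linarith)
      omega
    set B : ℕ → Set (Fin n → ℝ) := fun m => A (m+1) ∩ cube with hB
    -- core measure bound
    have bound : ∀ m : ℕ, volume (B m) ≤ ENNReal.ofReal ((6*K)^n * ψ (m+1) ^ n) := by
      intro m
      set q : ℕ := m + 1 with hq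
      have hq0 : (0:ℝ) < q := by positivity
      set F : Finset (Fin n → ℤ) :=
        Fintype.piFinset (fun _ => Finset.Icc (-((q*K : ℕ) : ℤ)) ((q*K : ℕ) : ℤ)) with hF
      have cover : B m ⊆ ⋃ p ∈ F, Set.pi Set.univ fun i =>
          Ioo ((θ i + p i - ψ q)/q) ((θ i + p i + ψ q)/q) := by
        rintro x ⟨⟨p, hp⟩, hx⟩
        have hpF : p ∈ F := by
          simp only [hF, Fintype.mem_piFinset, Finset.mem_Icc]
          intro i
          have h1 : |(q : ℝ) * x i - θ i - p i| < ψ q := hp i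
          have hxi : |x i| ≤ M := by
            rcases hx with ⟨hl, hr⟩
            exact abs_le.2 ⟨hl i, hr i⟩
          have hθi : |θ i| ≤ ‖θ‖ := by
            simpa using norm_le_pi_norm θ i
          have hpb : |(p i : ℝ)| ≤ q * K := by
            have : |(p i : ℝ)| ≤ |(q : ℝ) * x i| + |θ i| + ψ q := by
              have := abs_sub_abs_le_abs_sub ((q:ℝ) * x i - θ i) (p i)
              have h2 := abs_sub ((q:ℝ) * x i) (θ i)
              calc |(p i : ℝ)| ≤ |(q:ℝ) * x i - θ i| + ψ q := by
                    have := abs_sub_abs_le_abs_sub (p i : ℝ) ((q:ℝ) * x i - θ i)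
                    have h3 : |(p i:ℝ) - ((q:ℝ) * x i - θ i)| < ψ q := by
                      rw [abs_sub_comm]; exact h1
                    linarith
                _ ≤ |(q:ℝ) * x i| + |θ i| + ψ q := by
                    have := abs_sub ((q:ℝ) * x i) (θ i); linarith
            have h4 : |(q:ℝ) * x i| ≤ q * M := by
              rw [abs_mul, abs_of_nonneg hq0.le]
              exact mul_le_mul_of_nonneg_left hxi hq0.le
            have h5 : ‖θ‖ ≤ (⌈‖θ‖⌉₊ : ℝ) := Nat.le_ceil _
            have h6 : ψ q ≤ (⌈Cψ⌉₊ : ℝ) := (hCψ q).trans (Nat.le_ceil _)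
            have h7 : (K:ℝ) = (M:ℝ) + ⌈‖θ‖⌉₊ + ⌈Cψ⌉₊ := by
              simp [hK]
            have hq1 : (1:ℝ) ≤ q := by exact_mod_cast Nat.one_le_iff_ne_zero.2 (by omega)
            have : |(p i : ℝ)| ≤ q * M + ‖θ‖ + ψ q := by linarith
            have h8 : (q:ℝ) * M + ‖θ‖ + ψ q ≤ q * K := by
              rw [h7]
              nlinarith
            linarith
          have h9 := abs_le.1 hpb
          have hcast : ((q * K : ℕ) : ℝ) = (q : ℝ) * K := by push_cast; ring
          constructor
          · exact_mod_cast hcast.symm ▸ h9.1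
          · exact_mod_cast hcast.symm ▸ h9.2
        refine Set.mem_biUnion hpF fun i _ => ?_
        have h1 : |(q : ℝ) * x i - θ i - p i| < ψ q := hp i
        rw [abs_lt] at h1
        constructor
        · rw [div_lt_iff₀ hq0]; push_cast at h1 ⊢; linarith [h1.1]
        · rw [lt_div_iff₀ hq0]; push_cast at h1 ⊢; linarith [h1.2]
      calc volume (B m) ≤ ∑ p ∈ F, volume (Set.pi Set.univ fun i =>
              Ioo ((θ i + p i - ψ q)/q) ((θ i + p i + ψ q)/q)) :=
            (measure_mono cover).trans (measure_biUnion_finset_le F _)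
        _ = ∑ p ∈ F, ENNReal.ofReal (2 * ψ q / q) ^ n := by
            refine Finset.sum_congr rfl fun p _ => ?_
            rw [volume_pi_pi]
            have hfac : ∀ i : Fin n,
                volume (Ioo ((θ i + p i - ψ q)/q) ((θ i + p i + ψ q)/q))
                  = ENNReal.ofReal (2 * ψ q / q) := by
              intro i
              rw [Real.volume_Ioo]
              congr 1
              field_simp
              ring
            rw [Finset.prod_congr rfl fun i _ => hfac i, Finset.prod_const,
              Finset.card_univ, Fintype.card_fin]
        _ = (F.card : ℝ≥0∞) * ENNReal.ofReal (2 * ψ q / q) ^ n := by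
            rw [Finset.sum_const, nsmul_eq_mul]
        _ ≤ ENNReal.ofReal ((6*K)^n * ψ q ^ n) := by
            have hqK1 : 1 ≤ q * K := Nat.one_le_iff_ne_zero.2 (by positivity)
            have hIcc : (Finset.Icc (-((q*K : ℕ) : ℤ)) ((q*K : ℕ) : ℤ)).card
                = 2*(q*K) + 1 := by
              rw [Int.card_Icc]
              omega
            have hcard : F.card ≤ (3*(q*K))^n := by
              rw [hF, Fintype.card_piFinset, Finset.prod_congr rfl fun i _ => hIcc,
                Finset.prod_const, Finset.card_univ, Fintype.card_fin]
              exact Nat.pow_le_pow_left (by omega) n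
            calc (F.card : ℝ≥0∞) * ENNReal.ofReal (2 * ψ q / q) ^ n
                ≤ (((3*(q*K))^n : ℕ) : ℝ≥0∞) * ENNReal.ofReal (2 * ψ q / q) ^ n :=
                  mul_le_mul_left (by exact_mod_cast hcard) _
              _ = (((3*(q*K) : ℕ) : ℝ≥0∞) * ENNReal.ofReal (2 * ψ q / q)) ^ n := by
                  rw [Nat.cast_pow, ← mul_pow]
              _ = ENNReal.ofReal (((3*(q*K) : ℕ) : ℝ) * (2 * ψ q / q)) ^ n := by
                  rw [ENNReal.ofReal_mul (Nat.cast_nonneg _), ENNReal.ofReal_natCast]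
              _ = ENNReal.ofReal (6 * K * ψ q) ^ n := by
                  congr 2
                  have hqne : (q:ℝ) ≠ 0 := hq0.ne'
                  push_cast
                  field_simp
                  ring
              _ = ENNReal.ofReal ((6*K)^n * ψ q ^ n) := by
                  rw [← ENNReal.ofReal_pow (mul_nonneg (by positivity) (hψ q).le), ← mul_pow]
    -- Borel–Cantelli
    have hts : (∑' m, volume (B m)) ≠ ⊤ := by
      have hsum' : Summable (fun m => (6*(K:ℝ))^n * ψ (m+1) ^ n) := by
        exact (hsum.comp_injective (add_left_injective 1)).mul_left _
      have hofr := ENNReal.ofReal_tsum_of_nonneg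
        (fun m => mul_nonneg (by positivity) (pow_nonneg (hψ _).le n)) hsum'
      have hle : (∑' m, volume (B m))
          ≤ ENNReal.ofReal (∑' m, (6*(K:ℝ))^n * ψ (m+1) ^ n) := by
        rw [hofr]
        exact ENNReal.tsum_le_tsum fun m => bound m
      exact ne_top_of_le_ne_top ENNReal.ofReal_ne_top hle
    have hlim := measure_limsup_atTop_eq_zero hts
    refine measure_mono_null ?_ hlim
    rintro x ⟨hxS, hxc⟩
    rw [mem_limsup_iff_frequently_mem, Nat.frequently_atTop_iff_infinite]
    have : {q : ℕ | 0 < q ∧ x ∈ A q}.Infinite := hxS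
    have himg : {q : ℕ | 0 < q ∧ x ∈ A q} ⊆ (· + 1) '' {m : ℕ | x ∈ B m} := by
      rintro q ⟨hq0, hqA⟩
      exact ⟨q - 1, by simpa [hB, Nat.sub_add_cancel hq0] using ⟨hqA, hxc⟩, Nat.sub_add_cancel hq0⟩
    exact ((this.mono himg).of_image _)
  -- conclude
  have hcover : S ⊆ ⋃ M : ℕ, S ∩ Icc (fun _ => -(M:ℝ)) (fun _ => (M:ℝ)) := by
    intro x hx
    obtain ⟨M, hM⟩ : ∃ M : ℕ, ∀ i, |x i| ≤ M := by
      obtain ⟨R, hR⟩ := (Set.finite_range fun i => |x i|).bddAbove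
      exact ⟨⌈R⌉₊, fun i => le_trans (hR ⟨i, rfl⟩) (Nat.le_ceil R)⟩
    exact Set.mem_iUnion.2 ⟨M, hx, fun i => (abs_le.1 (hM i)).1,
      fun i => (abs_le.1 (hM i)).2⟩
  exact measure_mono_null hcover (measure_iUnion_null key)
end
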